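/- arXiv:1810.03792 — 6 statements merged into one kernel-verified Lean document; each statement's English description precedes it below -/
import Mathlib

section
/- Let (V,w) be an edge-weighted graph on a finite vertex set V with n = |V| vertices, let k ≤ n be a positive integer and ε > 0. Set n' = min(k + ⌈k/ε⌉, n), and let W ⊆ V be any set of n' vertices of largest weighted degree, i.e., |W| = n' and wdeg(u) ≥ wdeg(v) for every u ∈ W and v ∈ V \ W. Then there exists S* ⊆ W with |S*| = k such that E(S*) ≥ (1 − ε) · max{E(S) : S ⊆ V, |S| = k}. -/
/-
Write `covW S = Σ_{v ∈ S} wdeg v - internalWeight S / 2`, where `internalWeight S` is the weight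
inside `S` counted over ordered pairs. Start from an optimal `k`-set and repeatedly exchange a
vertex `v` outside `W` for a vertex `u ∈ W` of no smaller degree; this loses at most the weight
between `u` and the rest of the set. The at least `⌈k/ε⌉` candidates `u ∈ W` not yet in the set
send in total at most the optimum `M` into it, so the best of them loses at most `ε M / k`.
At most `k` exchanges give a `k`-subset of `W` that loses at most `ε M`.
-/

open Finset

variable {V : Type*} [Fintype V] [DecidableEq V]

/-- The weighted degree of a vertex: `wdeg v = w(v,v) + Σ_{u ≠ v} w(v,u)`. -/
noncomputable def wdeg (w : V → V → ℝ) (v : V) : ℝ :=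
  w v v + ∑ u ∈ univ.filter (fun u => u ≠ v), w v u

/-- The total weight covered by `S`: self-loop weights of vertices in `S` plus the
weight of every unordered pair of distinct vertices with at least one endpoint in `S`
(each unordered pair is counted twice in the ordered sum, hence the factor `1/2`). -/
noncomputable def covW (w : V → V → ℝ) (S : Finset V) : ℝ :=
  ∑ v ∈ S, w v v +
    (1 / 2) * ∑ p ∈ (univ ×ˢ univ).filter
      (fun p : V × V => p.1 ≠ p.2 ∧ (p.1 ∈ S ∨ p.2 ∈ S)), w p.1 p.2

theorem Finset.sum_sum_ite_and_mem {ι M : Type*} [Fintype ι] [DecidableEq ι] [AddCommMonoid M]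
    (S : Finset ι) (T : ι → Finset ι) (f : ι → ι → M) :
    ∑ a, ∑ b, (if a ∈ S ∧ b ∈ T a then f a b else 0) = ∑ a ∈ S, ∑ b ∈ T a, f a b := by
  simp only [ite_and, sum_ite_irrel, sum_const_zero, sum_ite_mem, univ_inter]

section InternalWeight

variable {α : Type*} [DecidableEq α] {w : α → α → ℝ}

noncomputable def internalWeight (w : α → α → ℝ) (S : Finset α) : ℝ :=
  ∑ a ∈ S, ∑ b ∈ S.erase a, w a b

lemma internalWeight_nonneg (hnonneg : ∀ u v, 0 ≤ w u v) (S : Finset α) :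
    0 ≤ internalWeight w S :=
  sum_nonneg fun _ _ => sum_nonneg fun _ _ => hnonneg _ _

lemma internalWeight_insert (hsymm : ∀ u v, w u v = w v u) {A : Finset α} {u : α}
    (hu : u ∉ A) :
    internalWeight w (insert u A) = internalWeight w A + 2 * ∑ x ∈ A, w u x := by
  have herase : ∀ a ∈ A, ∑ b ∈ (insert u A).erase a, w a b
      = w u a + ∑ b ∈ A.erase a, w a b := by
    intro a ha
    rw [erase_insert_of_ne (ne_of_mem_of_not_mem ha hu).symm,
      sum_insert fun h => hu (mem_of_mem_erase h), hsymm]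
  rw [internalWeight, sum_insert hu, erase_insert hu, sum_congr rfl herase, sum_add_distrib,
    internalWeight]
  ring

end InternalWeight

section CoveredWeight

variable {w : V → V → ℝ}

lemma covW_eq_sum_wdeg_sub_internalWeight (hsymm : ∀ u v, w u v = w v u) (S : Finset V) :
    covW w S = ∑ v ∈ S, wdeg w v - internalWeight w S / 2 := by
  -- inclusion-exclusion on `a ∈ S ∨ b ∈ S`, with the middle term transposed so that it becomes
  -- the first one after exchanging the order of summation
  have hpoint : ∀ a b, (if a ≠ b ∧ (a ∈ S ∨ b ∈ S) then w a b else 0) =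
      (if a ∈ S ∧ b ∈ univ.erase a then w a b else 0) +
      (if b ∈ S ∧ a ∈ univ.erase b then w b a else 0) -
      (if a ∈ S ∧ b ∈ S.erase a then w a b else 0) := by
    intro a b
    rw [hsymm b a]
    rcases eq_or_ne b a with rfl | hba
    · simp
    · by_cases ha : a ∈ S <;> by_cases hb : b ∈ S <;> simp [hba, hba.symm, ha, hb]
  have hpairs : ∑ p ∈ (univ ×ˢ univ).filter (fun p : V × V => p.1 ≠ p.2 ∧ (p.1 ∈ S ∨ p.2 ∈ S)),
      w p.1 p.2 = 2 * ∑ a ∈ S, ∑ b ∈ univ.erase a, w a b - internalWeight w S := by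
    rw [sum_filter, sum_product]
    simp only [hpoint, sum_add_distrib, sum_sub_distrib]
    rw [sum_comm (f := fun a b => if b ∈ S ∧ a ∈ univ.erase b then w b a else 0)]
    simp only [sum_sum_ite_and_mem, internalWeight]
    ring
  simp only [covW, wdeg, hpairs, sum_add_distrib, filter_ne']
  ring

lemma covW_insert (hsymm : ∀ u v, w u v = w v u) {A : Finset V} {u : V} (hu : u ∉ A) :
    covW w (insert u A) = covW w A + wdeg w u - ∑ x ∈ A, w u x := by
  rw [covW_eq_sum_wdeg_sub_internalWeight hsymm, covW_eq_sum_wdeg_sub_internalWeight hsymm,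
    sum_insert hu, internalWeight_insert hsymm hu]
  ring

lemma covW_nonneg (hnonneg : ∀ u v, 0 ≤ w u v) (S : Finset V) : 0 ≤ covW w S :=
  add_nonneg (sum_nonneg fun _ _ => hnonneg _ _)
    (mul_nonneg (by norm_num) (sum_nonneg fun _ _ => hnonneg _ _))

lemma covW_mono (hnonneg : ∀ u v, 0 ≤ w u v) {S T : Finset V} (hST : S ⊆ T) :
    covW w S ≤ covW w T := by
  have hpairs : (univ ×ˢ univ).filter (fun p : V × V => p.1 ≠ p.2 ∧ (p.1 ∈ S ∨ p.2 ∈ S)) ⊆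
      (univ ×ˢ univ).filter (fun p : V × V => p.1 ≠ p.2 ∧ (p.1 ∈ T ∨ p.2 ∈ T)) :=
    fun p => by
      simp only [mem_filter]
      exact fun ⟨hp, hne, hpS⟩ => ⟨hp, hne, hpS.imp (@hST _) (@hST _)⟩
  unfold covW
  gcongr
  · exact fun _ _ _ => hnonneg _ _
  · exact fun _ _ _ => hnonneg _ _

lemma sum_le_wdeg (hnonneg : ∀ u v, 0 ≤ w u v) {T : Finset V} {x : V} (hx : x ∉ T) :
    ∑ u ∈ T, w x u ≤ wdeg w x := by
  rw [wdeg, filter_ne']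
  have hT : T ⊆ univ.erase x := fun u hu => mem_erase.2 ⟨ne_of_mem_of_not_mem hu hx, mem_univ u⟩
  linarith [hnonneg x x, sum_le_sum_of_subset_of_nonneg (f := w x) hT fun _ _ _ => hnonneg x _]

lemma sum_sum_le_covW_of_disjoint (hsymm : ∀ u v, w u v = w v u)
    (hnonneg : ∀ u v, 0 ≤ w u v) {C A : Finset V} (hCA : Disjoint C A) :
    ∑ u ∈ C, ∑ x ∈ A, w u x ≤ covW w A := by
  have hdeg : ∀ x ∈ A, ∑ u ∈ C, w x u ≤ wdeg w x - ∑ b ∈ A.erase x, w x b := by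
    intro x hx
    have hxC : x ∉ C ∪ A.erase x := by
      simp [disjoint_right.1 hCA hx]
    have hbound := sum_le_wdeg hnonneg hxC
    rw [sum_union (hCA.mono_right (erase_subset x A))] at hbound
    linarith
  calc ∑ u ∈ C, ∑ x ∈ A, w u x = ∑ x ∈ A, ∑ u ∈ C, w x u := by
        rw [sum_comm]; simp only [hsymm]
    _ ≤ ∑ x ∈ A, (wdeg w x - ∑ b ∈ A.erase x, w x b) := sum_le_sum hdeg
    _ = ∑ x ∈ A, wdeg w x - internalWeight w A := sum_sub_distrib _ _
    _ ≤ covW w A := by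
        rw [covW_eq_sum_wdeg_sub_internalWeight hsymm]
        linarith [internalWeight_nonneg hnonneg A]

lemma covW_sub_le_covW_exchange (hsymm : ∀ u v, w u v = w v u)
    (hnonneg : ∀ u v, 0 ≤ w u v) {B : Finset V} {u v : V} (hv : v ∈ B) (hu : u ∉ B)
    (hdeg : wdeg w v ≤ wdeg w u) :
    covW w B - ∑ x ∈ B.erase v, w u x ≤ covW w (insert u (B.erase v)) := by
  have hremove := covW_insert hsymm (notMem_erase v B)
  rw [insert_erase hv] at hremove
  have hadd := covW_insert hsymm (fun h => hu (mem_of_mem_erase h) : u ∉ B.erase v)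
  linarith [sum_nonneg fun x (_ : x ∈ B.erase v) => hnonneg v x]

lemma exists_exchange_covW_ge (hsymm : ∀ u v, w u v = w v u) (hnonneg : ∀ u v, 0 ≤ w u v)
    {B W : Finset V} {v : V} (hvB : v ∈ B) (hdeg : ∀ u ∈ W, wdeg w v ≤ wdeg w u)
    (hWB : (W \ B).Nonempty) :
    ∃ u ∈ W \ B, covW w B - covW w B / #(W \ B) ≤ covW w (insert u (B.erase v)) := by
  have htotal : ∑ u ∈ W \ B, ∑ x ∈ B.erase v, w u x ≤ ∑ _u ∈ W \ B, covW w B / #(W \ B) := by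
    rw [sum_const, nsmul_eq_mul, mul_div_cancel₀ _ (by exact_mod_cast hWB.card_pos.ne')]
    exact (sum_sum_le_covW_of_disjoint hsymm hnonneg
      (sdiff_disjoint.mono_right (erase_subset v B))).trans (covW_mono hnonneg (erase_subset v B))
  obtain ⟨u, hu, hle⟩ := exists_le_of_sum_le hWB htotal
  have huW := mem_sdiff.1 hu
  exact ⟨u, hu, (sub_le_sub_left hle _).trans
    (covW_sub_le_covW_exchange hsymm hnonneg hvB huW.2 (hdeg u huW.1))⟩

lemma exists_subset_covW_ge (hsymm : ∀ u v, w u v = w v u) (hnonneg : ∀ u v, 0 ≤ w u v)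
    {W : Finset V} {k c : ℕ} {M : ℝ} (hc : 0 < c) (hW : W ≠ univ → k + c ≤ #W)
    (hdeg : ∀ u ∈ W, ∀ v, v ∉ W → wdeg w v ≤ wdeg w u)
    (hM : ∀ S : Finset V, #S = k → covW w S ≤ M) (B : Finset V) (hB : #B = k) :
    ∃ B' ⊆ W, #B' = k ∧ covW w B - #(B \ W) * (M / c) ≤ covW w B' := by
  induction h : #(B \ W) generalizing B with
  | zero =>
    exact ⟨B, sdiff_eq_empty_iff_subset.1 (card_eq_zero.1 h), hB, by simp⟩
  | succ j ih =>
    obtain ⟨v, hv⟩ : (B \ W).Nonempty := card_pos.1 (by omega)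
    obtain ⟨hvB, hvW⟩ := mem_sdiff.1 hv
    have hcWB : c ≤ #(W \ B) := by
      have hWlarge := hW fun hWuniv => hvW (hWuniv ▸ mem_univ v)
      have hsdiff := le_card_sdiff B W
      omega
    obtain ⟨u, hu, hexchange⟩ := exists_exchange_covW_ge hsymm hnonneg hvB
      (fun u hu => hdeg u hu v hvW) (card_pos.1 (by omega))
    obtain ⟨huW, huB⟩ := mem_sdiff.1 hu
    have hcard : #(insert u (B.erase v)) = k := by
      rw [card_insert_of_notMem fun h => huB (mem_of_mem_erase h), card_erase_of_mem hvB]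
      have hBpos := card_pos.2 ⟨v, hvB⟩
      omega
    have hout : #(insert u (B.erase v) \ W) = j := by
      rw [insert_sdiff_of_mem _ huW, erase_sdiff_comm, card_erase_of_mem hv]
      omega
    obtain ⟨B', hB'W, hB'k, hB'⟩ := ih _ hcard hout
    have hloss : covW w B / #(W \ B) ≤ M / c :=
      div_le_div₀ ((covW_nonneg hnonneg B).trans (hM B hB)) (hM B hB) (by exact_mod_cast hc)
        (by exact_mod_cast hcWB)
    refine ⟨B', hB'W, hB'k, ?_⟩
    push_cast at hB' ⊢
    linarith

end CoveredWeight

lemma natCast_mul_div_ceil_le {j k : ℕ} {ε M : ℝ} (hjk : j ≤ k) (hk : 0 < k) (hε : 0 < ε)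
    (hM : 0 ≤ M) : j * (M / ⌈(k : ℝ) / ε⌉₊) ≤ ε * M := by
  calc j * (M / ⌈(k : ℝ) / ε⌉₊) ≤ k * (M / ((k : ℝ) / ε)) := by
        gcongr
        exact Nat.le_ceil _
    _ = ε * M := by
        field_simp

theorem statement_0 (w : V → V → ℝ)
    (hsymm : ∀ u v, w u v = w v u) (hnonneg : ∀ u v, 0 ≤ w u v)
    (k : ℕ) (hk : 0 < k) (hkn : k ≤ Fintype.card V)
    (ε : ℝ) (hε : 0 < ε)
    (W : Finset V)
    (hWcard : W.card = min (k + ⌈(k : ℝ) / ε⌉₊) (Fintype.card V))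
    (hWdeg : ∀ u ∈ W, ∀ v, v ∉ W → wdeg w v ≤ wdeg w u) :
    ∃ Sstar : Finset V, Sstar ⊆ W ∧ Sstar.card = k ∧
      ∀ S : Finset V, S.card = k → (1 - ε) * covW w S ≤ covW w Sstar := by
  obtain ⟨Sopt, hSopt, hmax⟩ := exists_max_image (powersetCard k univ) (covW w)
    (powersetCard_nonempty.2 (by rwa [card_univ]))
  have hM : ∀ S : Finset V, #S = k → covW w S ≤ covW w Sopt :=
    fun S hS => hmax S (mem_powersetCard.2 ⟨subset_univ S, hS⟩)
  have hSoptk : #Sopt = k := (mem_powersetCard.1 hSopt).2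
  have hW : W ≠ univ → k + ⌈(k : ℝ) / ε⌉₊ ≤ #W := fun hW => by
    have hWlt := (card_lt_iff_ne_univ W).2 hW
    omega
  obtain ⟨Sstar, hsub, hcard, hge⟩ := exists_subset_covW_ge hsymm hnonneg
    (Nat.ceil_pos.2 (by positivity)) hW hWdeg hM Sopt hSoptk
  have hloss := natCast_mul_div_ceil_le (j := #(Sopt \ W)) (M := covW w Sopt)
    ((card_le_card sdiff_subset).trans hSoptk.le) hk hε (covW_nonneg hnonneg Sopt)
  have hstar : (1 - ε) * covW w Sopt ≤ covW w Sstar := by linarith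
  refine ⟨Sstar, hsub, hcard, fun S hS => ?_⟩
  rcases le_total ε 1 with hε1 | hε1
  · exact (mul_le_mul_of_nonneg_left (hM S hS) (by linarith)).trans hstar
  · exact (mul_nonpos_of_nonpos_of_nonneg (by linarith) (covW_nonneg hnonneg S)).trans
      (covW_nonneg hnonneg Sstar)
end

section
/- Let (V,w) be an edge-weighted graph, let U ⊆ V be nonempty, let 1 ≤ m ≤ |U|, and set ρ = m/|U|. Then the average of E(U*) over all m-element subsets U* ⊆ U is at least ρ(1 − ρ/2) · Σ_{u ∈ U} wdeg(u); that is, Σ_{U* ⊆ U, |U*| = m} E(U*) ≥ C(|U|, m) · ρ(1 − ρ/2) · Σ_{u ∈ U} wdeg(u). -/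
open Finset

variable {V : Type*} [Fintype V] [DecidableEq V]

omit [Fintype V] in
lemma countNotMem (U : Finset V) (m : ℕ) (v : V) :
    ((U.powersetCard m).filter (fun S => v ∉ S)) = (U.erase v).powersetCard m := by
  ext S
  simp only [mem_filter, mem_powersetCard, subset_erase]
  tauto

omit [Fintype V] in
lemma countMem (U : Finset V) (m : ℕ) (v : V) (hv : v ∈ U) (hm1 : 1 ≤ m) :
    ((U.powersetCard m).filter (fun S => v ∈ S)).card = (U.card - 1).choose (m - 1) := by
  have h1 := card_filter_add_card_filter_not (s := U.powersetCard m)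
    (p := fun S => v ∈ S)
  rw [countNotMem] at h1
  rw [card_powersetCard, card_powersetCard, card_erase_of_mem hv] at h1
  have hp : U.card.choose m = (U.card - 1).choose (m - 1) + (U.card - 1).choose m := by
    have h2 : U.card = (U.card - 1) + 1 := by
      have : 1 ≤ U.card := card_pos.mpr ⟨v, hv⟩
      omega
    have h3 : m = (m - 1) + 1 := by omega
    rw [h2, h3, Nat.choose_succ_succ]
    simp
  omega

omit [Fintype V] in
lemma countAvoid (U : Finset V) (m : ℕ) (u v : V) :
    ((U.powersetCard m).filter (fun S => ¬(u ∈ S ∨ v ∈ S))).card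
      = ((U.erase u).erase v).card.choose m := by
  rw [← card_powersetCard]
  congr 1
  ext S
  simp only [mem_filter, mem_powersetCard, subset_erase, not_or]
  tauto

lemma natIdA (n m : ℕ) (hm1 : 1 ≤ m) (hm : m ≤ n) :
    n * (n - 1).choose (m - 1) = n.choose m * m := by
  have := Nat.add_one_mul_choose_eq (n - 1) (m - 1)
  have h1 : n - 1 + 1 = n := by omega
  have h2 : m - 1 + 1 = m := by omega
  simpa [Nat.succ_eq_add_one, h1, h2] using this

lemma natIdB (n m : ℕ) :
    n.choose m * (n - m) * (n - 1 - m) = n * (n - 1) * ((n - 2).choose m) := by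
  rcases n with _ | n
  · simp
  rcases n with _ | n
  · rcases m with _ | m <;> simp
  · have h1 := Nat.choose_mul_succ_eq (n + 1) m
    have h2 := Nat.choose_mul_succ_eq n m
    have e1 : n + 1 + 1 = n + 2 := rfl
    have e2 : n + 2 - 1 - m = n + 1 - m := by omega
    have e3 : n + 2 - 1 = n + 1 := by omega
    have e4 : n + 2 - 2 = n := by omega
    rw [e1] at h1
    rw [e2, e3, e4]
    calc (n+2).choose m * (n + 2 - m) * (n + 1 - m)
        = (n+1).choose m * (n+2) * (n + 1 - m) := by rw [← h1]
      _ = (n+1).choose m * (n + 1 - m) * (n+2) := by ring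
      _ = n.choose m * (n+1) * (n+2) := by rw [← h2]
      _ = (n+2) * (n+1) * n.choose m := by ring

lemma ineqA (n m : ℕ) (hm1 : 1 ≤ m) (hm : m ≤ n) :
    (n.choose m : ℝ) * (((m : ℝ) / n) * (1 - ((m : ℝ) / n) / 2))
      ≤ ((n - 1).choose (m - 1) : ℝ) := by
  have hn : (0:ℝ) < n := by
    have : 1 ≤ n := le_trans hm1 hm
    exact_mod_cast Nat.lt_of_lt_of_le Nat.zero_lt_one this
  have hA : ((n - 1).choose (m - 1) : ℝ) = (n.choose m : ℝ) * m / n := by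
    rw [eq_div_iff (ne_of_gt hn)]
    have := natIdA n m hm1 hm
    exact_mod_cast (mul_comm ((n:ℕ)) ((n - 1).choose (m - 1)) ▸ this)
  rw [hA]
  have hc : (0:ℝ) ≤ (n.choose m : ℝ) := Nat.cast_nonneg _
  have hρ0 : (0:ℝ) ≤ (m:ℝ)/n := by positivity
  have hρ1 : (m:ℝ)/n ≤ 1 := by
    rw [div_le_one hn]; exact_mod_cast hm
  rw [mul_div_assoc]
  nlinarith [mul_nonneg (mul_nonneg hc hρ0) hρ0]

lemma ineqB (n m : ℕ) (hm1 : 1 ≤ m) (hm : m ≤ n) :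
    (n.choose m : ℝ) * (((m : ℝ) / n) * (1 - ((m : ℝ) / n) / 2)) * 2
      ≤ (n.choose m : ℝ) - ((n - 2).choose m : ℝ) := by
  have hn1 : 1 ≤ n := le_trans hm1 hm
  have hn : (0:ℝ) < n := by exact_mod_cast Nat.lt_of_lt_of_le Nat.zero_lt_one hn1
  have hc0 : (0:ℝ) ≤ (n.choose m : ℝ) := Nat.cast_nonneg _
  rcases eq_or_lt_of_le hm with heq | hlt
  · subst heq
    have hz : (m - 2).choose m = 0 := Nat.choose_eq_zero_of_lt (by omega)
    rw [hz]
    push_cast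
    rw [div_self (ne_of_gt hn)]
    nlinarith
  · have hn2 : 2 ≤ n := by omega
    have hid : (n.choose m : ℝ) * ((n:ℝ) - m) * ((n:ℝ) - 1 - m)
        = (n:ℝ) * ((n:ℝ) - 1) * ((n - 2).choose m : ℝ) := by
      have := natIdB n m
      have c1 : ((n - m : ℕ) : ℝ) = (n:ℝ) - m := by
        push_cast [Nat.cast_sub hm]; ring
      have c2 : ((n - 1 - m : ℕ) : ℝ) = (n:ℝ) - 1 - m := by
        have : n - 1 - m = n - (1 + m) := by omega
        rw [this, Nat.cast_sub (by omega)]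
        push_cast; ring
      have c3 : ((n - 1 : ℕ) : ℝ) = (n:ℝ) - 1 := by
        rw [Nat.cast_sub hn1]; push_cast; ring
      calc (n.choose m : ℝ) * ((n:ℝ) - m) * ((n:ℝ) - 1 - m)
          = ((n.choose m * (n - m) * (n - 1 - m) : ℕ) : ℝ) := by
            push_cast [c1, c2]; ring
        _ = ((n * (n - 1) * ((n - 2).choose m) : ℕ) : ℝ) := by rw [this]
        _ = (n:ℝ) * ((n:ℝ) - 1) * ((n - 2).choose m : ℝ) := by push_cast [c3]; ring
    have hc2 : (0:ℝ) ≤ ((n - 2).choose m : ℝ) := Nat.cast_nonneg _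
    have hnm : (0:ℝ) ≤ (n:ℝ) - m := by
      have : (m:ℝ) ≤ n := by exact_mod_cast hm
      linarith
    have key : ((n - 2).choose m : ℝ) * (n:ℝ)^2 ≤ (n.choose m : ℝ) * ((n:ℝ) - m)^2 := by
      have hm' : (1:ℝ) ≤ (m:ℝ) := by exact_mod_cast hm1
      have hnr : (2:ℝ) ≤ (n:ℝ) := by exact_mod_cast hn2
      nlinarith [hid, mul_nonneg (mul_nonneg hc0 hnm) (le_trans zero_le_one hm'),
        mul_nonneg hc2 hnm, mul_nonneg hc0 hnm]
    have hn2' : (0:ℝ) < (n:ℝ)^2 := by positivity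
    have e : (n.choose m : ℝ) * (((m : ℝ) / n) * (1 - ((m : ℝ) / n) / 2)) * 2
        = (n.choose m : ℝ) * (2*(m:ℝ)*n - (m:ℝ)^2) / (n:ℝ)^2 := by
      field_simp
    rw [e, div_le_iff₀ hn2']
    nlinarith [key]

theorem statement_4 (w : V → V → ℝ)
    (hsymm : ∀ u v, w u v = w v u) (hnonneg : ∀ u v, 0 ≤ w u v)
    (U : Finset V) (hU : U.Nonempty)
    (m : ℕ) (hm1 : 1 ≤ m) (hm : m ≤ U.card) :
    ∑ Ustar ∈ U.powersetCard m, covW w Ustar ≥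
      (U.card.choose m : ℝ) *
        (((m : ℝ) / U.card) * (1 - ((m : ℝ) / U.card) / 2)) *
          ∑ u ∈ U, wdeg w u := by
  classical
  have hn0 : 0 < U.card := lt_of_lt_of_le Nat.zero_lt_one (le_trans hm1 hm)
  set D := (univ ×ˢ univ).filter (fun p : V × V => p.1 ≠ p.2) with hD
  set K := (U.card.choose m : ℝ) *
      (((m : ℝ) / U.card) * (1 - ((m : ℝ) / U.card) / 2)) with hK
  have hρ0 : (0:ℝ) ≤ (m:ℝ)/U.card := by positivity
  have hρ1 : (m:ℝ)/U.card ≤ 1 := by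
    rw [div_le_one (by exact_mod_cast hn0)]
    exact_mod_cast hm
  have hK0 : 0 ≤ K := by
    rw [hK]
    have : (0:ℝ) ≤ 1 - (m:ℝ)/U.card/2 := by linarith
    exact mul_nonneg (Nat.cast_nonneg _) (mul_nonneg hρ0 this)
  -- claim 1: self-loop part of LHS
  have claim1 : ∑ S ∈ U.powersetCard m, ∑ v ∈ S, w v v
      = (((U.card - 1).choose (m - 1)) : ℝ) * ∑ v ∈ U, w v v := by
    have step : ∀ S ∈ U.powersetCard m, ∑ v ∈ S, w v v
        = ∑ v ∈ U, (if v ∈ S then w v v else 0) := by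
      intro S hS
      rw [Finset.sum_ite_mem]
      congr 1
      exact (inter_eq_right.mpr (mem_powersetCard.mp hS).1).symm
    rw [Finset.sum_congr rfl step, Finset.sum_comm]
    rw [Finset.mul_sum]
    refine Finset.sum_congr rfl fun v hv => ?_
    rw [← Finset.sum_filter, Finset.sum_const, nsmul_eq_mul, countMem U m v hv hm1]
  -- claim 2: pair part of LHS
  have claim2 : ∑ S ∈ U.powersetCard m, ∑ p ∈ (univ ×ˢ univ).filter
        (fun p : V × V => p.1 ≠ p.2 ∧ (p.1 ∈ S ∨ p.2 ∈ S)), w p.1 p.2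
      = ∑ p ∈ D,
          (((U.powersetCard m).filter (fun S => p.1 ∈ S ∨ p.2 ∈ S)).card : ℝ) * w p.1 p.2 := by
    have step : ∀ S : Finset V, (univ ×ˢ univ).filter
          (fun p : V × V => p.1 ≠ p.2 ∧ (p.1 ∈ S ∨ p.2 ∈ S))
        = D.filter (fun p : V × V => p.1 ∈ S ∨ p.2 ∈ S) := by
      intro S; rw [hD, Finset.filter_filter]
    rw [Finset.sum_congr rfl (fun S _ => by rw [step S, Finset.sum_filter])]
    rw [Finset.sum_comm]
    refine Finset.sum_congr rfl fun p _ => ?_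
    rw [← Finset.sum_filter, Finset.sum_const, nsmul_eq_mul]
  -- claim 3: cross term of RHS as a sum over D
  have claim3 : ∑ v ∈ U, ∑ u ∈ univ.filter (fun u => u ≠ v), w v u
      = ∑ p ∈ D, (if p.1 ∈ U then w p.1 p.2 else 0) := by
    rw [hD, Finset.sum_filter, Finset.sum_product]
    rw [show U = univ ∩ U from (univ_inter U).symm, ← Finset.sum_ite_mem]
    refine Finset.sum_congr rfl fun v _ => ?_
    by_cases hv : v ∈ U
    · simp only [hv, if_true, Finset.sum_filter]
      refine Finset.sum_congr rfl fun u _ => ?_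
      by_cases h : u = v
      · simp [h]
      · simp [h, Ne.symm h, hv]
    · simp [hv]
  -- claim 4: symmetry
  have claim4 : ∑ p ∈ D, (if p.1 ∈ U then w p.1 p.2 else 0)
      = ∑ p ∈ D, (if p.2 ∈ U then w p.1 p.2 else 0) := by
    refine Finset.sum_nbij' (fun p => p.swap) (fun p => p.swap) ?_ ?_ ?_ ?_ ?_
    · intro p hp; simp only [hD, mem_filter, mem_product, mem_univ, true_and] at hp ⊢
      exact fun h => hp (by simpa [Prod.ext_iff, eq_comm] using h)
    · intro p hp; simp only [hD, mem_filter, mem_product, mem_univ, true_and] at hp ⊢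
      exact fun h => hp (by simpa [Prod.ext_iff, eq_comm] using h)
    · intro p _; simp
    · intro p _; simp
    · intro p _; simp only [Prod.fst_swap, Prod.snd_swap]
      rw [hsymm p.1 p.2]
  -- coefficient bound
  have coefB : ∀ p ∈ D, K * ((if p.1 ∈ U then (1:ℝ) else 0) + (if p.2 ∈ U then (1:ℝ) else 0))
      ≤ (((U.powersetCard m).filter (fun S => p.1 ∈ S ∨ p.2 ∈ S)).card : ℝ) := by
    intro p hp
    have hne : p.1 ≠ p.2 := by
      simp only [hD, mem_filter, mem_product, mem_univ, true_and] at hp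
      exact hp
    by_cases h1 : p.1 ∈ U <;> by_cases h2 : p.2 ∈ U
    · -- both endpoints in U
      have hsplit := card_filter_add_card_filter_not (s := U.powersetCard m)
        (p := fun S => p.1 ∈ S ∨ p.2 ∈ S)
      rw [countAvoid, card_powersetCard] at hsplit
      have h21 : p.2 ∈ U.erase p.1 := mem_erase.mpr ⟨Ne.symm hne, h2⟩
      have hc2 : ((U.erase p.1).erase p.2).card = U.card - 2 := by
        rw [card_erase_of_mem h21, card_erase_of_mem h1]
        omega
      rw [hc2] at hsplit
      have hle : (U.card - 2).choose m ≤ U.card.choose m :=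
        Nat.choose_le_choose m (by omega)
      have hcv : (((U.powersetCard m).filter (fun S => p.1 ∈ S ∨ p.2 ∈ S)).card : ℝ)
          = (U.card.choose m : ℝ) - ((U.card - 2).choose m : ℝ) := by
        have : ((U.powersetCard m).filter (fun S => p.1 ∈ S ∨ p.2 ∈ S)).card
            = U.card.choose m - (U.card - 2).choose m := by omega
        rw [this, Nat.cast_sub hle]
      rw [hcv]
      simp only [if_pos h1, if_pos h2]
      have := ineqB U.card m hm1 hm
      rw [hK]
      linarith
    · -- only p.1 in U
      have hfe : (U.powersetCard m).filter (fun S => p.1 ∈ S ∨ p.2 ∈ S)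
          = (U.powersetCard m).filter (fun S => p.1 ∈ S) := by
        apply filter_congr
        intro S hS
        have hsub := (mem_powersetCard.mp hS).1
        constructor
        · exact fun h => h.resolve_right (fun hh => h2 (hsub hh))
        · exact Or.inl
      rw [hfe, countMem U m p.1 h1 hm1]
      simp only [if_pos h1, if_neg h2, add_zero, mul_one]
      rw [hK]
      exact ineqA U.card m hm1 hm
    · -- only p.2 in U
      have hfe : (U.powersetCard m).filter (fun S => p.1 ∈ S ∨ p.2 ∈ S)
          = (U.powersetCard m).filter (fun S => p.2 ∈ S) := by
        apply filter_congr
        intro S hS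
        have hsub := (mem_powersetCard.mp hS).1
        constructor
        · exact fun h => h.resolve_left (fun hh => h1 (hsub hh))
        · exact Or.inr
      rw [hfe, countMem U m p.2 h2 hm1]
      simp only [if_neg h1, if_pos h2, zero_add, mul_one]
      rw [hK]
      exact ineqA U.card m hm1 hm
    · -- neither
      simp only [if_neg h1, if_neg h2, add_zero, mul_zero]
      exact Nat.cast_nonneg _
  -- put everything together
  have hLHS : ∑ Ustar ∈ U.powersetCard m, covW w Ustar
      = (((U.card - 1).choose (m - 1)) : ℝ) * ∑ v ∈ U, w v v
        + (1/2) * ∑ p ∈ D,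
            (((U.powersetCard m).filter (fun S => p.1 ∈ S ∨ p.2 ∈ S)).card : ℝ) * w p.1 p.2 := by
    simp only [covW]
    rw [Finset.sum_add_distrib, ← Finset.mul_sum, claim1, claim2]
  have hRHS : K * ∑ u ∈ U, wdeg w u
      = K * ∑ v ∈ U, w v v
        + (1/2) * ∑ p ∈ D,
            K * ((if p.1 ∈ U then (1:ℝ) else 0) + (if p.2 ∈ U then (1:ℝ) else 0)) * w p.1 p.2 := by
    simp only [wdeg]
    rw [Finset.sum_add_distrib, mul_add, claim3]
    congr 1
    have hsum : ∑ p ∈ D, K * ((if p.1 ∈ U then (1:ℝ) else 0) + (if p.2 ∈ U then (1:ℝ) else 0)) * w p.1 p.2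
        = K * ((∑ p ∈ D, (if p.1 ∈ U then w p.1 p.2 else 0))
            + ∑ p ∈ D, (if p.2 ∈ U then w p.1 p.2 else 0)) := by
      rw [← Finset.sum_add_distrib, Finset.mul_sum]
      refine Finset.sum_congr rfl fun p _ => ?_
      by_cases h1 : p.1 ∈ U <;> by_cases h2 : p.2 ∈ U <;> simp [h1, h2] <;> ring
    rw [hsum, ← claim4]
    ring
  rw [ge_iff_le, hRHS, hLHS]
  have hself : 0 ≤ ∑ v ∈ U, w v v := Finset.sum_nonneg fun v _ => hnonneg v v
  have hA : K ≤ (((U.card - 1).choose (m - 1)) : ℝ) := by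
    rw [hK]; exact ineqA U.card m hm1 hm
  have hterm : ∑ p ∈ D,
        K * ((if p.1 ∈ U then (1:ℝ) else 0) + (if p.2 ∈ U then (1:ℝ) else 0)) * w p.1 p.2
      ≤ ∑ p ∈ D,
        (((U.powersetCard m).filter (fun S => p.1 ∈ S ∨ p.2 ∈ S)).card : ℝ) * w p.1 p.2 := by
    refine Finset.sum_le_sum fun p hp => ?_
    exact mul_le_mul_of_nonneg_right (coefB p hp) (hnonneg p.1 p.2)
  have h1 : K * ∑ v ∈ U, w v v ≤ (((U.card - 1).choose (m - 1)) : ℝ) * ∑ v ∈ U, w v v :=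
    mul_le_mul_of_nonneg_right hA hself
  linarith
end

section
/- Let a_1, …, a_ℓ ≥ 0 be nonnegative real numbers, let δ > 0, and let P = Σ_{i=1}^{ℓ} a_i. Then there exists a collection 𝒯 of subsets of {1, …, ℓ} such that: (i) for every j ∈ {1, …, ℓ}, the number of j-element sets in 𝒯 is at most C(j·⌈1/δ⌉, j); and (ii) for every S ⊆ {1, …, ℓ} there exists T ∈ 𝒯 with T ⊆ S and Σ_{i ∈ S \ T} a_i ≤ δ · P. -/
/-!
Rank the coordinates so that `a` decreases with the rank and put `k = ⌈1/δ⌉`. Take for `𝒯` the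
sets `T` all of whose elements have rank `< k·|T|`; the `j`-element ones lie among the `jk`
highest-ranked coordinates, whence the bound `C(jk, j)`. Given `S`, let `r` be the largest cutoff
such that `S` has at least `r/k` elements of rank `< r`, and let `T` be these elements. By
maximality of `r`, every window of ranks `[r, m)` contains fewer than `(m - r)/k` elements of `S`,
so Abel summation against the decreasing sequence gives `k · ∑_{S \ T} a ≤ ∑ a`.
-/

open Finset

theorem Antitone.sum_Ico_mul_le_sum_Ico_mul {b f g : ℕ → ℝ} {r n : ℕ} (hb : Antitone b)
    (hbn : 0 ≤ b n) (hfg : ∀ m ≤ n, ∑ i ∈ Ico r m, f i ≤ ∑ i ∈ Ico r m, g i) :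
    ∑ i ∈ Ico r n, f i * b i ≤ ∑ i ∈ Ico r n, g i * b i := by
  rcases lt_or_ge n r with hnr | hrn
  · simp [Ico_eq_empty_of_le hnr.le]
  set D : ℕ → ℝ := fun m => ∑ i ∈ Ico r m, (g i - f i) with hD
  have hD0 : ∀ m ≤ n, 0 ≤ D m := fun m hm => by
    simpa only [hD, sum_sub_distrib, sub_nonneg] using hfg m hm
  -- `D ≥ 0` and `b` decreases, so moving the weight `b` up to the current index only lowers it
  have abel : ∀ m, r ≤ m → m ≤ n → D m * b m ≤ ∑ i ∈ Ico r m, (g i - f i) * b i := by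
    intro m hrm
    induction m, hrm using Nat.le_induction with
    | base => simp [hD]
    | succ m hrm ih =>
      intro hm
      calc D (m + 1) * b (m + 1)
          ≤ D (m + 1) * b m := mul_le_mul_of_nonneg_left (hb m.le_succ) (hD0 _ hm)
        _ = D m * b m + (g m - f m) * b m := by simp only [hD, sum_Ico_succ_top hrm]; ring
        _ ≤ ∑ i ∈ Ico r (m + 1), (g i - f i) * b i := by
          rw [sum_Ico_succ_top hrm]
          gcongr
          exact ih (by omega)
  have := (mul_nonneg (hD0 n le_rfl) hbn).trans (abel n hrn le_rfl)
  simpa only [sub_mul, sum_sub_distrib, sub_nonneg] using this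

theorem exists_cutoff_mul_sum_le {b : ℕ → ℝ} (hb : Antitone b) (hb0 : ∀ i, 0 ≤ b i) (k : ℕ)
    {n : ℕ} {S : Finset ℕ} (hS : S ⊆ range n) :
    ∃ r, r ≤ k * #{i ∈ S | i < r} ∧ k * ∑ i ∈ S with r ≤ i, b i ≤ ∑ i ∈ range n, b i := by
  classical
  set χ : ℕ → ℝ := fun i => if i ∈ S then 1 else 0 with hχ
  have hcount : ∀ m, (#{i ∈ S | i < m} : ℝ) = ∑ i ∈ range m, χ i := fun m => by
    rw [hχ, sum_boole]
    congr 2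
    ext i
    simp [and_comm]
  set P : ℕ → Prop := fun r => r ≤ k * #{i ∈ S | i < r}
  set r := Nat.findGreatest P n
  have hrn : r ≤ n := Nat.findGreatest_le n
  have hr : P r := Nat.findGreatest_spec (Nat.zero_le n) (Nat.zero_le _)
  have hmax : ∀ m, r < m → m ≤ n → k * #{i ∈ S | i < m} < m := fun m h1 h2 =>
    not_le.1 (Nat.findGreatest_is_greatest (P := P) h1 h2)
  refine ⟨r, hr, ?_⟩
  have hsparse : ∀ m ≤ n, ∑ i ∈ Ico r m, k * χ i ≤ ∑ i ∈ Ico r m, (1 : ℝ) := by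
    intro m hm
    rcases le_or_gt m r with hmr | hrm
    · simp [Ico_eq_empty_of_le hmr]
    have h1 := sum_range_add_sum_Ico χ hrm.le
    have h2 : (r : ℝ) ≤ k * ∑ i ∈ range r, χ i := by rw [← hcount]; exact_mod_cast hr
    have h3 : k * ∑ i ∈ range m, χ i < m := by rw [← hcount]; exact_mod_cast hmax m hrm hm
    rw [← mul_sum, sum_const, Nat.card_Ico, nsmul_one, Nat.cast_sub hrm.le]
    nlinarith
  have htail : ∑ i ∈ S with r ≤ i, b i = ∑ i ∈ Ico r n, χ i * b i := by
    simp only [hχ, ite_mul, one_mul, zero_mul, ← sum_filter]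
    congr 1
    ext i
    have := @hS i
    simp only [mem_filter, mem_Ico, mem_range] at this ⊢
    tauto
  calc (k : ℝ) * ∑ i ∈ S with r ≤ i, b i
      = ∑ i ∈ Ico r n, k * χ i * b i := by rw [htail, mul_sum]; simp only [mul_assoc]
    _ ≤ ∑ i ∈ Ico r n, 1 * b i := hb.sum_Ico_mul_le_sum_Ico_mul (hb0 n) hsparse
    _ ≤ ∑ i ∈ range n, b i := by
      rw [← sum_range_add_sum_Ico b hrn]
      simp only [one_mul, le_add_iff_nonneg_left]
      exact sum_nonneg fun i _ => hb0 i

section RankBounded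

variable {ι : Type*} [Fintype ι] [DecidableEq ι]

def rankBoundedSets (e : ι → ℕ) (k : ℕ) : Finset (Finset ι) := {T | ∀ i ∈ T, e i < k * #T}

theorem card_filter_card_rankBoundedSets_le {e : ι → ℕ} (he : e.Injective) (k j : ℕ) :
    #{T ∈ rankBoundedSets e k | #T = j} ≤ (j * k).choose j := by
  have hsub : {T ∈ rankBoundedSets e k | #T = j} ⊆ powersetCard j {i | e i < k * j} := by
    intro T hT
    simp only [rankBoundedSets, mem_filter, mem_univ, true_and] at hT
    obtain ⟨hT, rfl⟩ := hT
    exact mem_powersetCard.2 ⟨fun i hi => by simpa using hT i hi, rfl⟩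
  have hsmall : #{i | e i < k * j} ≤ j * k := by
    rw [mul_comm j, ← card_range (k * j)]
    exact card_le_card_of_injOn e (fun i hi => by simpa using hi) he.injOn
  calc #{T ∈ rankBoundedSets e k | #T = j}
      ≤ #(powersetCard j {i | e i < k * j}) := card_le_card hsub
    _ ≤ (j * k).choose j := by rw [card_powersetCard]; exact Nat.choose_le_choose j hsmall

theorem exists_mem_rankBoundedSets_mul_sum_sdiff_le {e : ι → ℕ} (he : e.Injective) {b : ℕ → ℝ}
    (hb : Antitone b) (hb0 : ∀ m, 0 ≤ b m) {n : ℕ} (hen : ∀ i, e i < n) (k : ℕ)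
    (S : Finset ι) :
    ∃ T ∈ rankBoundedSets e k, T ⊆ S ∧ k * ∑ i ∈ S \ T, b (e i) ≤ ∑ m ∈ range n, b m := by
  obtain ⟨r, hr, hsum⟩ := exists_cutoff_mul_sum_le hb hb0 k (S := S.image e)
    (fun m hm => by obtain ⟨i, -, rfl⟩ := mem_image.1 hm; exact mem_range.2 (hen i))
  rw [filter_image, card_image_of_injective _ he] at hr
  rw [filter_image, sum_image he.injOn] at hsum
  refine ⟨{i ∈ S | e i < r}, ?_, filter_subset _ _, ?_⟩
  · simp only [rankBoundedSets, mem_filter, mem_univ, true_and]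
    exact fun i hi => hi.2.trans_le hr
  · simpa only [← filter_not, not_lt] using hsum

end RankBounded

theorem antitone_dite_lt_of_nonneg {n : ℕ} {b : Fin n → ℝ} (hb : Antitone b) (hb0 : ∀ i, 0 ≤ b i) :
    Antitone fun m => if h : m < n then b ⟨m, h⟩ else 0 := by
  intro m m' hmm'
  by_cases h' : m' < n
  · simp only [h', dif_pos, hmm'.trans_lt h']
    exact hb (Fin.mk_le_mk.2 hmm')
  · simp only [h', dite_false]
    split_ifs
    exacts [hb0 _, le_rfl]

theorem statement_5 (ℓ : ℕ) (a : Fin ℓ → ℝ) (ha : ∀ i, 0 ≤ a i)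
    (δ : ℝ) (hδ : 0 < δ) :
    ∃ 𝒯 : Finset (Finset (Fin ℓ)),
      (∀ j : ℕ, 1 ≤ j → j ≤ ℓ →
        (𝒯.filter (fun T => T.card = j)).card ≤ (j * ⌈1 / δ⌉₊).choose j) ∧
      (∀ S : Finset (Fin ℓ), ∃ T ∈ 𝒯, T ⊆ S ∧ ∑ i ∈ S \ T, a i ≤ δ * ∑ i, a i) := by
  classical
  -- `e i` is the rank of `i`; `b` lists the values of `a` in decreasing order, padded with zeros
  set σ := Tuple.sort (OrderDual.toDual ∘ a)
  have hσ : Antitone (a ∘ σ) := monotone_toDual_comp_iff.1 (Tuple.monotone_sort _)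
  set e : Fin ℓ → ℕ := fun i => σ.symm i
  set b : ℕ → ℝ := fun m => if h : m < ℓ then a (σ ⟨m, h⟩) else 0
  have hb0 : ∀ m, 0 ≤ b m := fun m => by unfold b; split_ifs <;> simp [ha]
  have hbe : ∀ i, b (e i) = a i := fun i => by simp [b, e]
  have hbsum : ∑ m ∈ range ℓ, b m = ∑ i, a i := by
    rw [← Fin.sum_univ_eq_sum_range, ← Equiv.sum_comp σ a]
    simp [b]
  have he : e.Injective := fun i j h => σ.symm.injective (Fin.val_injective h)
  refine ⟨rankBoundedSets e ⌈1 / δ⌉₊, fun j _ _ => card_filter_card_rankBoundedSets_le he _ j,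
    fun S => ?_⟩
  obtain ⟨T, hT, hTS, hsum⟩ := exists_mem_rankBoundedSets_mul_sum_sdiff_le (b := b) he
    (antitone_dite_lt_of_nonneg hσ fun _ => ha _) hb0 (fun i => (σ.symm i).isLt) ⌈1 / δ⌉₊ S
  refine ⟨T, hT, hTS, ?_⟩
  simp only [hbe, hbsum] at hsum
  have hkδ : 1 ≤ ⌈1 / δ⌉₊ * δ := by
    rw [← div_le_iff₀ hδ]
    exact Nat.le_ceil _
  have := sum_nonneg fun i (_ : i ∈ S \ T) => ha i
  nlinarith
end

section
/- Let a_1 ≥ a_2 ≥ … ≥ a_ℓ ≥ 0 be a nonincreasing sequence of nonnegative reals, let r ≥ 1 be an integer, and let i_1 < i_2 < … < i_m be indices in {1, …, ℓ}. Suppose t ≤ m is such that i_g > g·r for every g with t < g ≤ m. Then Σ_{g = t+1}^{m} a_{i_g} ≤ (1/r) · Σ_{i=1}^{ℓ} a_i. -/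
open Finset

/-- Statement 6, with the indices `i_1 < ⋯ < i_m` encoded (zero-indexed) as a strictly
monotone map `idx : Fin m → Fin ℓ`; the one-indexed value `i_g` corresponds to
`(idx g : ℕ) + 1` for the zero-indexed `g`, and the one-indexed position of `g` is
`(g : ℕ) + 1`. -/
theorem statement_6 (ℓ m t r : ℕ) (hr : 1 ≤ r)
    (a : Fin ℓ → ℝ) (hmono : Antitone a) (hnn : ∀ i, 0 ≤ a i)
    (idx : Fin m → Fin ℓ) (hidx : StrictMono idx)
    (ht : t ≤ m)
    (hcond : ∀ g : Fin m, t < (g : ℕ) + 1 → ((g : ℕ) + 1) * r < (idx g : ℕ) + 1) :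
    ∑ g ∈ univ.filter (fun g : Fin m => t < (g : ℕ) + 1), a (idx g) ≤
      (1 / (r : ℝ)) * ∑ i, a i := by
  have hrpos : (0:ℝ) < r := by exact_mod_cast hr
  rw [one_div, ← div_eq_inv_mul, le_div_iff₀ hrpos]
  -- define f : ℕ → ℝ extending a by zero
  set f : ℕ → ℝ := fun n => if h : n < ℓ then a ⟨n, h⟩ else 0 with hf
  have hfnn : ∀ n, 0 ≤ f n := by
    intro n; simp only [hf]; split <;> [exact hnn _; exact le_rfl]
  set S : Finset (Fin m) := univ.filter (fun g : Fin m => t < (g : ℕ) + 1) with hS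
  -- key bound from hcond: for g ∈ S, (g+1)*r ≤ idx g
  have hkey : ∀ g ∈ S, ((g : ℕ) + 1) * r ≤ (idx g : ℕ) := by
    intro g hg
    have := hcond g (by simpa [hS] using hg)
    omega
  -- per-term bound
  have hterm : ∀ g ∈ S, (r:ℝ) * a (idx g) ≤
      ∑ n ∈ Finset.Ico ((g:ℕ)*r) ((g:ℕ)*r + r), f n := by
    intro g hg
    have hk := hkey g hg
    have hle : ∀ n ∈ Finset.Ico ((g:ℕ)*r) ((g:ℕ)*r + r), a (idx g) ≤ f n := by
      intro n hn
      rw [Finset.mem_Ico] at hn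
      have hnlt : n < ℓ := by
        have h1 : (g:ℕ)*r + r = ((g:ℕ)+1)*r := by ring
        have h2 := (idx g).2
        omega
      have : f n = a ⟨n, hnlt⟩ := by simp [hf, hnlt]
      rw [this]
      apply hmono
      show (n : ℕ) ≤ (idx g : ℕ)
      have : (g:ℕ)*r + r = ((g:ℕ)+1)*r := by ring
      omega
    calc (r:ℝ) * a (idx g) = ∑ _n ∈ Finset.Ico ((g:ℕ)*r) ((g:ℕ)*r + r), a (idx g) := by
          rw [Finset.sum_const, Nat.card_Ico]
          simp [nsmul_eq_mul]
      _ ≤ ∑ n ∈ Finset.Ico ((g:ℕ)*r) ((g:ℕ)*r + r), f n := Finset.sum_le_sum hle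
  -- blocks disjoint
  have hdisj : (S : Set (Fin m)).PairwiseDisjoint
      (fun g : Fin m => Finset.Ico ((g:ℕ)*r) ((g:ℕ)*r + r)) := by
    intro g _ g' _ hne
    have hne' : (g:ℕ) ≠ (g':ℕ) := fun h => hne (Fin.ext h)
    apply Finset.disjoint_left.mpr
    intro n hn hn'
    rw [Finset.mem_Ico] at hn hn'
    rcases lt_or_gt_of_ne hne' with h | h
    · have : ((g:ℕ)+1)*r ≤ (g':ℕ)*r := Nat.mul_le_mul_right r h
      have : (g:ℕ)*r + r ≤ (g':ℕ)*r := by nlinarith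
      omega
    · have : ((g':ℕ)+1)*r ≤ (g:ℕ)*r := Nat.mul_le_mul_right r h
      have : (g':ℕ)*r + r ≤ (g:ℕ)*r := by nlinarith
      omega
  calc (∑ g ∈ S, a (idx g)) * (r:ℝ) = ∑ g ∈ S, (r:ℝ) * a (idx g) := by
        rw [Finset.sum_mul]; exact Finset.sum_congr rfl fun g _ => mul_comm _ _
    _ ≤ ∑ g ∈ S, ∑ n ∈ Finset.Ico ((g:ℕ)*r) ((g:ℕ)*r + r), f n :=
        Finset.sum_le_sum hterm
    _ = ∑ n ∈ S.biUnion (fun g => Finset.Ico ((g:ℕ)*r) ((g:ℕ)*r + r)), f n :=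
        (Finset.sum_biUnion hdisj).symm
    _ ≤ ∑ n ∈ Finset.range ℓ, f n := by
        apply Finset.sum_le_sum_of_subset_of_nonneg
        · intro n hn
          rw [Finset.mem_biUnion] at hn
          obtain ⟨g, hg, hn⟩ := hn
          rw [Finset.mem_Ico] at hn
          rw [Finset.mem_range]
          have hk := hkey g hg
          have h1 : (g:ℕ)*r + r = ((g:ℕ)+1)*r := by ring
          have := (idx g).2
          omega
        · intro n _ _; exact hfnn n
    _ = ∑ i, a i := by
        rw [← Fin.sum_univ_eq_sum_range f ℓ]
        exact Finset.sum_congr rfl fun i _ => by simp [hf, i.2]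
end

section
/- Let (V,w) be an edge-weighted graph, let δ ≥ 0, let S ⊆ V, and let T_1, …, T_m be pairwise disjoint subsets whose union is S; define S_i = S \ (T_1 ∪ … ∪ T_{i−1}). If E(T_i, S_{i+1}) ≤ δ · Σ_{v ∈ T_i} wdeg(v) for every 1 ≤ i ≤ m, then Σ_{i=1}^{m} E(T_i) ≤ (1 + 2δ) · E(S). -/
open Finset

variable {V : Type*} [Fintype V] [DecidableEq V]

/-- `E(A,B) = Σ_{u ∈ A} Σ_{v ∈ B} w(u,v)`. -/
noncomputable def crossW (w : V → V → ℝ) (A B : Finset V) : ℝ :=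
  ∑ u ∈ A, ∑ v ∈ B, w u v

set_option linter.unusedSectionVars false
lemma covW_eq (w : V → V → ℝ) (X : Finset V) :
    covW w X = ∑ v ∈ X, w v v + (1 / 2) * ∑ p ∈ univ ×ˢ univ,
      (if p.1 ≠ p.2 ∧ (p.1 ∈ X ∨ p.2 ∈ X) then w p.1 p.2 else 0) := by
  rw [covW, Finset.sum_filter]

lemma crossW_eq (w : V → V → ℝ) (A B : Finset V) :
    crossW w A B = ∑ p ∈ univ ×ˢ univ,
      (if p.1 ∈ A ∧ p.2 ∈ B then w p.1 p.2 else 0) := by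
  have h : (univ ×ˢ univ).filter (fun p : V × V => p.1 ∈ A ∧ p.2 ∈ B) = A ×ˢ B := by
    ext p; simp [Finset.mem_product]
  rw [← Finset.sum_filter, h, Finset.sum_product, crossW]

lemma crossW_comm (w : V → V → ℝ) (hsymm : ∀ u v, w u v = w v u) (A B : Finset V) :
    crossW w B A = crossW w A B := by
  rw [crossW, crossW, Finset.sum_comm]
  exact Finset.sum_congr rfl fun u _ => Finset.sum_congr rfl fun v _ => hsymm v u

lemma covW_union_add (w : V → V → ℝ) (hsymm : ∀ u v, w u v = w v u)
    (A B : Finset V) (hAB : Disjoint A B) :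
    covW w A + covW w B = covW w (A ∪ B) + crossW w A B := by
  have hd : ∀ x : V, x ∈ A → x ∉ B := fun x hx => Finset.disjoint_left.mp hAB hx
  have hpair : (∑ p ∈ univ ×ˢ univ,
        (if p.1 ≠ p.2 ∧ (p.1 ∈ A ∨ p.2 ∈ A) then w p.1 p.2 else 0)) +
      (∑ p ∈ univ ×ˢ univ,
        (if p.1 ≠ p.2 ∧ (p.1 ∈ B ∨ p.2 ∈ B) then w p.1 p.2 else 0)) =
      (∑ p ∈ univ ×ˢ univ,
        (if p.1 ≠ p.2 ∧ (p.1 ∈ A ∪ B ∨ p.2 ∈ A ∪ B) then w p.1 p.2 else 0)) +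
      (crossW w A B + crossW w B A) := by
    rw [crossW_eq w A B, crossW_eq w B A]
    rw [← Finset.sum_add_distrib, ← Finset.sum_add_distrib, ← Finset.sum_add_distrib]
    refine Finset.sum_congr rfl ?_
    rintro ⟨u, v⟩ -
    simp only [Finset.mem_union, ne_eq]
    by_cases h1 : u ∈ A <;> by_cases h2 : v ∈ A <;> by_cases h3 : u ∈ B <;>
      by_cases h4 : v ∈ B <;> by_cases h5 : u = v <;>
      first
        | (exact absurd h3 (hd u h1))
        | (exact absurd h4 (hd v h2))
        | simp_all
  rw [covW_eq, covW_eq, covW_eq, Finset.sum_union hAB]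
  have := crossW_comm w hsymm A B
  linarith [hpair]

lemma covW_empty (w : V → V → ℝ) : covW w (∅ : Finset V) = 0 := by
  simp [covW]

lemma deg_sum_le (w : V → V → ℝ) (hnonneg : ∀ u v, 0 ≤ w u v) (S : Finset V) :
    ∑ v ∈ S, wdeg w v ≤ 2 * covW w S := by
  have hdouble : ∑ p ∈ (univ ×ˢ univ).filter
        (fun p : V × V => p.1 ≠ p.2 ∧ p.1 ∈ S), w p.1 p.2
      = ∑ v ∈ S, ∑ u ∈ univ.filter (fun u => u ≠ v), w v u := by
    rw [Finset.sum_filter, Finset.sum_product]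
    rw [show (∑ v ∈ S, ∑ u ∈ univ.filter (fun u => u ≠ v), w v u)
        = ∑ v ∈ univ, if v ∈ S then ∑ u ∈ univ.filter (fun u => u ≠ v), w v u else 0 from by
      rw [Finset.sum_ite_mem, Finset.univ_inter]]
    refine Finset.sum_congr rfl fun v _ => ?_
    by_cases hv : v ∈ S
    · simp only [hv, and_true, if_true]
      rw [← Finset.sum_filter]
      refine Finset.sum_congr ?_ fun _ _ => rfl
      ext u; simp [ne_comm]
    · simp [hv]
  have hsub : (univ ×ˢ univ).filter (fun p : V × V => p.1 ≠ p.2 ∧ p.1 ∈ S)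
      ⊆ (univ ×ˢ univ).filter (fun p : V × V => p.1 ≠ p.2 ∧ (p.1 ∈ S ∨ p.2 ∈ S)) := by
    intro p hp
    simp only [Finset.mem_filter] at hp ⊢
    exact ⟨hp.1, hp.2.1, Or.inl hp.2.2⟩
  have hle : ∑ p ∈ (univ ×ˢ univ).filter
        (fun p : V × V => p.1 ≠ p.2 ∧ p.1 ∈ S), w p.1 p.2
      ≤ ∑ p ∈ (univ ×ˢ univ).filter
        (fun p : V × V => p.1 ≠ p.2 ∧ (p.1 ∈ S ∨ p.2 ∈ S)), w p.1 p.2 :=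
    Finset.sum_le_sum_of_subset_of_nonneg hsub fun p _ _ => hnonneg p.1 p.2
  have hloops : 0 ≤ ∑ v ∈ S, w v v := Finset.sum_nonneg fun v _ => hnonneg v v
  have : ∑ v ∈ S, wdeg w v
      = ∑ v ∈ S, w v v + ∑ v ∈ S, ∑ u ∈ univ.filter (fun u => u ≠ v), w v u := by
    rw [← Finset.sum_add_distrib]; rfl
  rw [this, covW]
  linarith [hdouble ▸ hle]

/-- Statement 9, with the sets `T_1, …, T_m` encoded (zero-indexed) as
`T : Fin m → Finset V`; `Srest i` is `S` minus the first `i` of the `T`'s, so that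
`Srest ((i : ℕ) + 1)` is `S_{i+1}` in one-indexed notation. -/
theorem statement_9 (w : V → V → ℝ)
    (hsymm : ∀ u v, w u v = w v u) (hnonneg : ∀ u v, 0 ≤ w u v)
    (δ : ℝ) (hδ : 0 ≤ δ)
    (S : Finset V) (m : ℕ) (T : Fin m → Finset V)
    (hdisj : ∀ i j : Fin m, i ≠ j → Disjoint (T i) (T j))
    (hunion : Finset.univ.biUnion T = S)
    (Srest : ℕ → Finset V)
    (hSrest : ∀ i : ℕ,
      Srest i = S \ (univ.filter (fun j : Fin m => (j : ℕ) < i)).biUnion T)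
    (hcut : ∀ i : Fin m,
      crossW w (T i) (Srest ((i : ℕ) + 1)) ≤ δ * ∑ v ∈ T i, wdeg w v) :
    ∑ i : Fin m, covW w (T i) ≤ (1 + 2 * δ) * covW w S := by
  have hmemS : ∀ (k : ℕ) (v : V),
      v ∈ Srest k ↔ v ∈ S ∧ ∀ j : Fin m, (j : ℕ) < k → v ∉ T j := by
    intro k v
    rw [hSrest]
    simp only [Finset.mem_sdiff, Finset.mem_biUnion, Finset.mem_filter,
      Finset.mem_univ, true_and, not_exists, not_and]
  have hTsubS : ∀ i : Fin m, T i ⊆ S := fun i =>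
    hunion ▸ Finset.subset_biUnion_of_mem T (Finset.mem_univ i)
  have hS0 : Srest 0 = S := by
    ext v; rw [hmemS]; simp
  have hSm : Srest m = ∅ := by
    ext v
    rw [hmemS]
    simp only [Finset.notMem_empty, iff_false, not_and, not_forall]
    intro hvS
    rw [← hunion] at hvS
    obtain ⟨j, -, hj⟩ := Finset.mem_biUnion.mp hvS
    exact ⟨j, j.isLt, by simpa using hj⟩
  have hsplit : ∀ i : Fin m, T i ∪ Srest ((i : ℕ) + 1) = Srest (i : ℕ) := by
    intro i
    ext v
    rw [Finset.mem_union, hmemS, hmemS]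
    constructor
    · rintro (hv | ⟨hvS, hall⟩)
      · refine ⟨hTsubS i hv, fun j hj hvj => ?_⟩
        have hij : i ≠ j := fun h => by subst h; exact absurd hj (lt_irrefl _)
        exact Finset.disjoint_left.mp (hdisj i j hij) hv hvj
      · exact ⟨hvS, fun j hj => hall j (Nat.lt_succ_of_lt hj)⟩
    · rintro ⟨hvS, hall⟩
      by_cases hvi : v ∈ T i
      · exact Or.inl hvi
      · refine Or.inr ⟨hvS, fun j hj => ?_⟩
        rcases Nat.lt_succ_iff_lt_or_eq.mp hj with h | h
        · exact hall j h
        · have : j = i := Fin.ext h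
          subst this; exact hvi
  have hdisjTS : ∀ i : Fin m, Disjoint (T i) (Srest ((i : ℕ) + 1)) := by
    intro i
    rw [Finset.disjoint_left]
    intro v hv hv'
    exact ((hmemS _ v).mp hv').2 i (Nat.lt_succ_self _) hv
  have hterm : ∀ i : Fin m, covW w (T i)
      = covW w (Srest (i : ℕ)) - covW w (Srest ((i : ℕ) + 1))
        + crossW w (T i) (Srest ((i : ℕ) + 1)) := by
    intro i
    have := covW_union_add w hsymm (T i) (Srest ((i : ℕ) + 1)) (hdisjTS i)
    rw [hsplit i] at this
    linarith
  have hsum : ∑ i : Fin m, covW w (T i)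
      = (covW w S - 0) + ∑ i : Fin m, crossW w (T i) (Srest ((i : ℕ) + 1)) := by
    rw [Finset.sum_congr rfl fun i _ => hterm i, Finset.sum_add_distrib]
    congr 1
    rw [Fin.sum_univ_eq_sum_range
      (fun i => covW w (Srest i) - covW w (Srest (i + 1))) m]
    rw [Finset.sum_range_sub' (fun i => covW w (Srest i)) m, hS0, hSm, covW_empty]
  have hcross : ∑ i : Fin m, crossW w (T i) (Srest ((i : ℕ) + 1))
      ≤ δ * (2 * covW w S) := by
    calc ∑ i : Fin m, crossW w (T i) (Srest ((i : ℕ) + 1))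
        ≤ ∑ i : Fin m, δ * ∑ v ∈ T i, wdeg w v := Finset.sum_le_sum fun i _ => hcut i
      _ = δ * ∑ i : Fin m, ∑ v ∈ T i, wdeg w v := by rw [Finset.mul_sum]
      _ = δ * ∑ v ∈ S, wdeg w v := by
          rw [← hunion, Finset.sum_biUnion]
          intro i _ j _ hij
          exact hdisj i j hij
      _ ≤ δ * (2 * covW w S) := by
          have := deg_sum_le w hnonneg S
          exact mul_le_mul_of_nonneg_left this hδ
  rw [hsum]
  linarith
end

section
/- Let I be a finite nonempty index set, and for each i ∈ I let G_i be a simple d-regular graph on a vertex set V_i with |V_i| = n. Let G be the disjoint union of the G_i, let 1 ≤ k ≤ n and η ∈ [0,1]. Suppose that for every i ∈ I and every nonempty S ⊆ V_i with |S| ≤ k, one has ∂_{G_i}(S) > (1 − η) · d · |S|. Then for every S ⊆ V = ⨆_{i ∈ I} V_i with |S| = k, cov_G(S) > d·k·(2 − η)/2. -/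
open Finset

/-- `cov_G(S)`: the number of edges of `G` with at least one endpoint in `S`. -/
noncomputable def covG {α : Type*} (G : SimpleGraph α) (S : Finset α) : ℕ :=
  {e ∈ G.edgeSet | ∃ v ∈ S, v ∈ e}.ncard

/-- `∂_G(S)`: the number of edges of `G` with exactly one endpoint in `S`. -/
noncomputable def bdryG {α : Type*} (G : SimpleGraph α) (S : Finset α) : ℕ :=
  {e ∈ G.edgeSet | ∃ u v, e = s(u, v) ∧ u ∈ S ∧ v ∉ S}.ncard

/-- The disjoint union of the graphs `G i`: a graph on `Σ i, V i` whose edges are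
exactly the edges within each `G i`. -/
def sigmaGraph {I : Type*} {V : I → Type*} (G : ∀ i, SimpleGraph (V i)) :
    SimpleGraph (Σ i, V i) where
  Adj x y := ∃ (i : I) (a b : V i), (G i).Adj a b ∧ x = ⟨i, a⟩ ∧ y = ⟨i, b⟩
  symm := by
    constructor
    rintro x y ⟨i, a, b, hab, rfl, rfl⟩
    exact ⟨i, b, a, hab.symm, rfl, rfl⟩
  loopless := by
    constructor
    rintro x ⟨i, a, b, hab, rfl, h⟩
    have hab' : a = b := eq_of_heq (Sigma.mk.inj_iff.mp h).2
    exact (G i).loopless.irrefl a (hab' ▸ hab)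

/-! Counting darts gives `2 cov(S) = d |S| + ∂(S)` in a `d`-regular graph: a dart leaving `S`
covers its edge once, a dart inside `S` is one of the two darts of its edge. Coverage is additive
over the components of the disjoint union, so summing `∂(S_i) > (1 - η) d |S_i|` over the
slices `S_i = S ∩ V_i` gives `2 cov(S) > (2 - η) d k`, strictly since some slice is nonempty. -/

open scoped Function

namespace SimpleGraph

section DoubleCounting

variable {V : Type*} [Fintype V] [DecidableEq V] (G : SimpleGraph V) [DecidableRel G.Adj]
  (S : Finset V)

lemma bdryG_eq_card_dart : bdryG G S = #{d : G.Dart | d.fst ∈ S ∧ d.snd ∉ S} := by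
  have hset : {e ∈ G.edgeSet | ∃ u v, e = s(u, v) ∧ u ∈ S ∧ v ∉ S} =
      (({d : G.Dart | d.fst ∈ S ∧ d.snd ∉ S} : Finset _).image Dart.edge : Set (Sym2 V)) := by
    ext e
    simp only [Set.mem_ofPred_eq, coe_image, coe_filter, mem_univ, true_and, Set.mem_image]
    constructor
    · rintro ⟨he, u, v, rfl, hu, hv⟩
      exact ⟨⟨(u, v), he⟩, ⟨hu, hv⟩, rfl⟩
    · rintro ⟨d, ⟨hu, hv⟩, rfl⟩
      exact ⟨d.edge_mem, d.fst, d.snd, rfl, hu, hv⟩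
  rw [bdryG, hset, Set.ncard_coe_finset, card_image_of_injOn]
  intro d₁ hd₁ d₂ hd₂ h
  simp only [coe_filter, mem_univ, true_and, Set.mem_ofPred_eq] at hd₁ hd₂
  refine ((dart_edge_eq_iff d₁ d₂).1 h).resolve_right ?_
  rintro rfl
  exact hd₂.2 hd₁.1

lemma two_mul_covG_eq_card_dart :
    2 * covG G S = #{d : G.Dart | d.fst ∈ S ∨ d.snd ∈ S} := by
  have hcov : covG G S = #{e ∈ G.edgeFinset | ∃ v ∈ S, v ∈ e} := by
    rw [covG, ← Set.ncard_coe_finset]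
    simp
  rw [hcov, card_eq_sum_card_fiberwise (f := Dart.edge)
      (t := {e ∈ G.edgeFinset | ∃ v ∈ S, v ∈ e}), mul_comm, ← smul_eq_mul, ← sum_const]
  · refine sum_congr rfl fun e he => ?_
    simp only [mem_filter, mem_edgeFinset] at he
    rw [← G.dart_edge_fiber_card e he.1, filter_filter]
    congr 1
    refine filter_congr fun d _ => (and_iff_right_of_imp ?_).symm
    rintro rfl
    obtain ⟨v, hv, hve⟩ := he.2
    rcases Sym2.mem_iff.1 hve with rfl | rfl
    exacts [Or.inl hv, Or.inr hv]
  · intro d hd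
    simp only [coe_filter, mem_univ, true_and, Set.mem_ofPred_eq, mem_edgeFinset] at hd ⊢
    refine ⟨d.edge_mem, ?_⟩
    rcases hd with h | h
    exacts [⟨_, h, Sym2.mem_mk_left _ _⟩, ⟨_, h, Sym2.mem_mk_right _ _⟩]

lemma two_mul_covG : 2 * covG G S = ∑ v ∈ S, G.degree v + bdryG G S := by
  rw [two_mul_covG_eq_card_dart, bdryG_eq_card_dart]
  have hsplit : #{d : G.Dart | d.fst ∈ S ∨ d.snd ∈ S} =
      #{d : G.Dart | d.fst ∈ S} + #{d : G.Dart | d.fst ∉ S ∧ d.snd ∈ S} := by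
    rw [← card_union_of_disjoint (disjoint_filter.2 fun _ _ h h' => h'.1 h), ← filter_or]
    congr 1
    refine filter_congr fun d _ => by tauto
  have hdeg : #{d : G.Dart | d.fst ∈ S} = ∑ v ∈ S, G.degree v := by
    rw [card_eq_sum_card_fiberwise (f := (·.fst)) (t := S) fun d hd => by simpa using hd]
    refine sum_congr rfl fun v hv => ?_
    rw [← G.dart_fst_fiber_card_eq_degree v, filter_filter]
    congr 1
    exact filter_congr fun d _ => and_iff_right_of_imp (· ▸ hv)
  have hsymm :
      #{d : G.Dart | d.fst ∉ S ∧ d.snd ∈ S} = #{d : G.Dart | d.fst ∈ S ∧ d.snd ∉ S} :=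
    card_nbij' Dart.symm Dart.symm (fun d hd => by simp_all) (fun d hd => by simp_all)
      (fun d _ => d.symm_symm) (fun d _ => d.symm_symm)
  rw [hsplit, hdeg, hsymm]

variable {G} {d : ℕ}

lemma IsRegularOfDegree.two_mul_covG (hreg : G.IsRegularOfDegree d) :
    2 * covG G S = d * #S + bdryG G S := by
  rw [G.two_mul_covG, sum_congr rfl fun v _ => hreg v, sum_const, smul_eq_mul, mul_comm]

lemma IsRegularOfDegree.two_sub_mul_card_lt_two_mul_covG (hreg : G.IsRegularOfDegree d) {η : ℝ}
    (h : (1 - η) * d * #S < bdryG G S) : (2 - η) * d * #S < 2 * covG G S := by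
  have hcount : (2 * covG G S : ℝ) = d * #S + bdryG G S := by
    exact_mod_cast hreg.two_mul_covG S
  linarith

end DoubleCounting

lemma covG_map {α β : Type*} (f : α ↪ β) (G : SimpleGraph α) (S : Finset β) :
    covG (G.map f) S = covG G (S.preimage f f.injective.injOn) := by
  have hset : {e ∈ (G.map f).edgeSet | ∃ v ∈ S, v ∈ e} =
      f.sym2Map '' {e ∈ G.edgeSet | ∃ v ∈ S.preimage f f.injective.injOn, v ∈ e} := by
    ext e
    rw [edgeSet_map]
    constructor
    · rintro ⟨⟨e, he, rfl⟩, v, hv, hve⟩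
      obtain ⟨a, hae, rfl⟩ := Sym2.mem_map.1 hve
      exact ⟨e, ⟨he, a, mem_preimage.2 hv, hae⟩, rfl⟩
    · rintro ⟨e, ⟨he, a, ha, hae⟩, rfl⟩
      exact ⟨⟨e, he, rfl⟩, f a, mem_preimage.1 ha, Sym2.mem_map.2 ⟨a, hae, rfl⟩⟩
  rw [covG, covG, hset, Set.ncard_image_of_injective _ f.sym2Map.injective]

lemma covG_iSup {α ι : Type*} [Finite α] [Fintype ι] {H : ι → SimpleGraph α}
    (h : Pairwise (Disjoint on fun i => (H i).edgeSet)) (S : Finset α) :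
    covG (⨆ i, H i) S = ∑ i, covG (H i) S := by
  have hset : {e ∈ (⨆ i, H i).edgeSet | ∃ v ∈ S, v ∈ e} =
      ⋃ i, {e ∈ (H i).edgeSet | ∃ v ∈ S, v ∈ e} := by
    ext e
    simp [edgeSet_iSup]
  rw [covG, hset, Set.ncard_iUnion_of_finite (fun _ => Set.toFinite _)
      fun i j hij => (h hij).mono (Set.sep_subset _ _) (Set.sep_subset _ _),
    finsum_eq_sum_of_fintype]
  rfl

section Sigma

variable {I : Type*} {V : I → Type*} (G : ∀ i, SimpleGraph (V i))

lemma sigmaGraph_eq_iSup_map : sigmaGraph G = ⨆ i, (G i).map (Function.Embedding.sigmaMk i) := by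
  ext x y
  simp [sigmaGraph, iSup_adj, eq_comm]

lemma pairwise_disjoint_edgeSet_map_sigmaMk :
    Pairwise (Disjoint on fun i => ((G i).map (Function.Embedding.sigmaMk i)).edgeSet) := by
  intro i j hij
  rw [Function.onFun, edgeSet_map, edgeSet_map, Set.disjoint_left]
  rintro _ ⟨e, -, rfl⟩ ⟨e', -, he'⟩
  induction e with | _ a b => ?_
  induction e' with | _ a' b' => ?_
  simp only [Function.Embedding.sym2Map_apply, Sym2.map_mk, Sym2.eq_iff] at he'
  rcases he' with ⟨h, -⟩ | ⟨h, -⟩ <;> exact hij (congrArg Sigma.fst h).symm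

lemma covG_sigmaGraph [Fintype I] [∀ i, Finite (V i)] (S : Finset (Σ i, V i)) :
    covG (sigmaGraph G) S =
      ∑ i, covG (G i) (S.preimage (Sigma.mk i) sigma_mk_injective.injOn) := by
  rw [sigmaGraph_eq_iSup_map, covG_iSup (pairwise_disjoint_edgeSet_map_sigmaMk G)]
  exact sum_congr rfl fun i _ => covG_map _ _ _

end Sigma

end SimpleGraph

open SimpleGraph

theorem statement_12_general {I : Type*} [Fintype I]
    {V : I → Type*} [∀ i, Fintype (V i)]
    (G : ∀ i, SimpleGraph (V i)) [∀ i, DecidableRel (G i).Adj]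
    (d : ℕ)
    (hreg : ∀ i, (G i).IsRegularOfDegree d)
    (k : ℕ) (hk1 : 1 ≤ k) (η : ℝ)
    (hyp : ∀ i, ∀ S : Finset (V i), S.Nonempty → S.card ≤ k →
      (1 - η) * d * S.card < (bdryG (G i) S : ℝ)) :
    ∀ S : Finset (Σ i, V i), S.card = k →
      (d : ℝ) * k * (2 - η) / 2 < (covG (sigmaGraph G) S : ℝ) := by
  classical
  intro S hS
  set T : ∀ i, Finset (V i) := fun i => S.preimage (Sigma.mk i) sigma_mk_injective.injOn
  have hsum : ∑ i, #(T i) = k := by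
    rw [← card_sigma, sigma_preimage_mk_of_subset S (subset_univ _), hS]
  have hcardT : ∀ i, #(T i) ≤ k := fun i =>
    hsum ▸ single_le_sum (f := fun i => #(T i)) (fun _ _ => Nat.zero_le _) (mem_univ i)
  have hlt : ∀ i, (T i).Nonempty → (2 - η) * d * #(T i) < 2 * covG (G i) (T i) := fun i hi =>
    (hreg i).two_sub_mul_card_lt_two_mul_covG _ (hyp i _ hi (hcardT i))
  have hle : ∀ i, (2 - η) * d * #(T i) ≤ 2 * covG (G i) (T i) := fun i => by
    rcases (T i).eq_empty_or_nonempty with hi | hi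
    · simp [hi]
    · exact (hlt i hi).le
  obtain ⟨⟨i, a⟩, ha⟩ := card_pos.1 (hS ▸ hk1)
  calc (d : ℝ) * k * (2 - η) / 2 = (∑ i, (2 - η) * d * #(T i)) / 2 := by
        rw [← mul_sum, ← hsum]; push_cast; ring
    _ < (∑ i, 2 * covG (G i) (T i) : ℝ) / 2 := by
        gcongr ?_ / 2
        exact sum_lt_sum (fun i _ => hle i) ⟨i, mem_univ i, hlt i ⟨a, mem_preimage.2 ha⟩⟩
    _ = covG (sigmaGraph G) S := by
        rw [covG_sigmaGraph, ← mul_sum]; push_cast; ring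

theorem statement_12 {I : Type*} [Fintype I] [Nonempty I]
    {V : I → Type*} [∀ i, Fintype (V i)] [∀ i, DecidableEq (V i)]
    (G : ∀ i, SimpleGraph (V i)) [∀ i, DecidableRel (G i).Adj]
    (d n : ℕ) (hcard : ∀ i, Fintype.card (V i) = n)
    (hreg : ∀ i, (G i).IsRegularOfDegree d)
    (k : ℕ) (hk1 : 1 ≤ k) (hk : k ≤ n) (η : ℝ) (hη0 : 0 ≤ η) (hη1 : η ≤ 1)
    (hyp : ∀ i, ∀ S : Finset (V i), S.Nonempty → S.card ≤ k →
      (1 - η) * d * S.card < (bdryG (G i) S : ℝ)) :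
    ∀ S : Finset (Σ i, V i), S.card = k →
      (d : ℝ) * k * (2 - η) / 2 < (covG (sigmaGraph G) S : ℝ) :=
  statement_12_general G d hreg k hk1 η hyp
end
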